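/- Let a, b, c be points on the unit sphere S² forming a spherical right triangle with the right angle at c, with |ca| = |cb| = Δ ∈ (0, π/2). Then there is a point o ∈ S² with arccos⟨o,a⟩ = arccos⟨o,b⟩ = arccos⟨o,c⟩ = arctan(√2 tan(Δ/2)). -/
import Mathlib


open scoped RealInnerProductSpace

/-- Spherical distance between unit vectors of `E³`. -/
noncomputable def sdist (p q : EuclideanSpace ℝ (Fin 3)) : ℝ := Real.arccos ⟪p, q⟫

set_option maxHeartbeats 1000000 in
theorem stmt8 (Δ : ℝ) (hΔ : Δ ∈ Set.Ioo 0 (Real.pi / 2))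
    (a b c : EuclideanSpace ℝ (Fin 3))
    (ha : ‖a‖ = 1) (hb : ‖b‖ = 1) (hc : ‖c‖ = 1)
    (hca : sdist c a = Δ) (hcb : sdist c b = Δ)
    (hright : ⟪a - ⟪a, c⟫ • c, b - ⟪b, c⟫ • c⟫ = 0) :
    ∃ o : EuclideanSpace ℝ (Fin 3), ‖o‖ = 1 ∧
      sdist o a = Real.arctan (Real.sqrt 2 * Real.tan (Δ / 2)) ∧
      sdist o b = Real.arctan (Real.sqrt 2 * Real.tan (Δ / 2)) ∧
      sdist o c = Real.arctan (Real.sqrt 2 * Real.tan (Δ / 2)) := by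
  obtain ⟨hΔ0, hΔπ⟩ := hΔ
  have hπ := Real.pi_pos
  set k := Real.cos Δ with hkdef
  have hk0 : 0 < k := Real.cos_pos_of_mem_Ioo ⟨by linarith, hΔπ⟩
  have hk1 : k ≤ 1 := Real.cos_le_one Δ
  -- inner products
  have haa : ⟪a, a⟫ = 1 := by
    rw [real_inner_self_eq_norm_sq, ha]; norm_num
  have hbb : ⟪b, b⟫ = 1 := by
    rw [real_inner_self_eq_norm_sq, hb]; norm_num
  have hcc : ⟪c, c⟫ = 1 := by
    rw [real_inner_self_eq_norm_sq, hc]; norm_num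
  have hbnd : ∀ x : EuclideanSpace ℝ (Fin 3), ‖x‖ = 1 → |⟪c, x⟫| ≤ 1 := by
    intro x hx
    simpa [hc, hx] using abs_real_inner_le_norm c x
  have hca' : ⟪c, a⟫ = k := by
    have h := congrArg Real.cos hca
    rw [sdist, Real.cos_arccos (by linarith [(abs_le.1 (hbnd a ha)).1])
      (by linarith [(abs_le.1 (hbnd a ha)).2])] at h
    exact h
  have hcb' : ⟪c, b⟫ = k := by
    have h := congrArg Real.cos hcb
    rw [sdist, Real.cos_arccos (by linarith [(abs_le.1 (hbnd b hb)).1])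
      (by linarith [(abs_le.1 (hbnd b hb)).2])] at h
    exact h
  have hac : ⟪a, c⟫ = k := by rw [real_inner_comm]; exact hca'
  have hbc : ⟪b, c⟫ = k := by rw [real_inner_comm]; exact hcb'
  have hab : ⟪a, b⟫ = k ^ 2 := by
    have h := hright
    simp only [inner_sub_left, inner_sub_right, real_inner_smul_left,
      real_inner_smul_right, hac, hbc, hca', hcb', hcc] at h
    nlinarith [h]
  have hba : ⟪b, a⟫ = k ^ 2 := by rw [real_inner_comm]; exact hab
  -- the angle
  set x := Real.sqrt 2 * Real.tan (Δ / 2) with hxdef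
  have hcos2 : Real.cos (Δ / 2) > 0 :=
    Real.cos_pos_of_mem_Ioo ⟨by linarith, by linarith⟩
  have htan0 : 0 ≤ Real.tan (Δ / 2) := by
    rw [Real.tan_eq_sin_div_cos]
    have : 0 ≤ Real.sin (Δ / 2) := Real.sin_nonneg_of_nonneg_of_le_pi (by linarith) (by linarith)
    positivity
  have hx0 : 0 ≤ x := by positivity
  have hx2 : x ^ 2 = 2 * (1 - k) / (1 + k) := by
    have hco : Real.cos (Δ / 2) ^ 2 = (1 + k) / 2 := by
      have := Real.cos_sq (Δ / 2)
      rw [show 2 * (Δ / 2) = Δ by ring] at this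
      rw [this]; ring
    have hs : Real.sin (Δ / 2) ^ 2 = (1 - k) / 2 := by
      have := Real.sin_sq_add_cos_sq (Δ / 2)
      rw [hco] at this; linarith
    rw [hxdef, mul_pow, Real.sq_sqrt (by norm_num : (0:ℝ) ≤ 2), Real.tan_eq_sin_div_cos,
      div_pow, hs, hco]
    have h1 : (1:ℝ) + k ≠ 0 := by linarith
    field_simp
  set θ := Real.arctan x with hθdef
  have hθ0 : 0 ≤ θ := by
    rw [hθdef, ← Real.arctan_zero]
    exact Real.arctan_strictMono.monotone hx0
  have hθπ : θ ≤ Real.pi := by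
    have := Real.arctan_lt_pi_div_two x
    linarith
  set t := Real.cos θ with htdef
  have h1k : (1:ℝ) + k ≠ 0 := by linarith
  have h3k : (3:ℝ) - k ≠ 0 := by linarith
  have ht2 : t ^ 2 = (1 + k) / (3 - k) := by
    have hxx : 1 + x ^ 2 = (3 - k) / (1 + k) := by
      rw [hx2]; field_simp; ring
    rw [htdef, hθdef, Real.cos_arctan, div_pow, one_pow,
      Real.sq_sqrt (by positivity : (0:ℝ) ≤ 1 + x ^ 2), hxx, one_div_div]
  -- the circumcenter
  set o : EuclideanSpace ℝ (Fin 3) :=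
    t • c + (t / (1 + k)) • (a + b - (2 * k) • c) with hodef
  have hoa : ⟪o, a⟫ = t := by
    rw [hodef]
    simp only [inner_add_left, inner_sub_left, real_inner_smul_left, haa, hba, hca']
    field_simp
    ring
  have hob : ⟪o, b⟫ = t := by
    rw [hodef]
    simp only [inner_add_left, inner_sub_left, real_inner_smul_left, hab, hbb, hcb']
    field_simp
    ring
  have hoc : ⟪o, c⟫ = t := by
    rw [hodef]
    simp only [inner_add_left, inner_sub_left, real_inner_smul_left, hac, hbc, hcc]
    field_simp
    ring
  have hoo : ⟪o, o⟫ = 1 := by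
    have e : ⟪o, o⟫ = t ^ 2 + t ^ 2 / (1 + k) ^ 2 * (2 - 2 * k ^ 2) := by
      rw [hodef]
      simp only [inner_add_left, inner_add_right, inner_sub_left, inner_sub_right,
        real_inner_smul_left, real_inner_smul_right, haa, hbb, hcc, hab, hba, hac, hbc,
        hca', hcb']
      field_simp
      ring
    rw [e, ht2]
    field_simp
    ring
  have hno : ‖o‖ = 1 := by
    have h : ‖o‖ ^ 2 = 1 := by rw [← real_inner_self_eq_norm_sq]; exact hoo
    nlinarith [norm_nonneg o]
  refine ⟨o, hno, ?_, ?_, ?_⟩ <;>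
    simp only [sdist, hoa, hob, hoc, htdef] <;>
    exact Real.arccos_cos hθ0 hθπ
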